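/- Let n and d be positive integers, ℓ a Kupisch series of type Ã_{n-1}, f(i) = i - ℓ(i) - d + 1, I = { i ∈ ℤ : (i mod n) ∈ J }, ι : ℤ → I the unique order-preserving bijection, and ℓ'(k) = |[f(ι(k)), ι(k)] ∩ I| - d for k ∈ ℤ. Then there exists an integer ℓ' such that ℓ'(k) = ℓ' for all k ∈ ℤ; that is, the function ℓ' is constant. -/

import Mathlib

/-!
`f` is monotone and commutes with translation by `n`, and `f̄` permutes its periodic points, so
`f` restricts to an injective, hence strictly monotone, self-map of `I`. Transported along `ι` it
becomes a strictly monotone `g : ℤ → ℤ` with `ℓ' k + d = k + 1 - g k`, which is antitone in `k`.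
On the other hand `ℓ' k + d` only depends on `ι k` modulo `n`, so every value of `ℓ'` recurs
arbitrarily far to the right, and an antitone function with this property is constant.
-/

open Set Function

/-- The set of periodic points of the induced map `f̄ : ℤ/nℤ → ℤ/nℤ`. -/
def Jset (n : ℕ) (fbar : ZMod n → ZMod n) : Set (ZMod n) :=
  {j | ∃ N : ℕ, 1 ≤ N ∧ fbar^[N] j = j}

/-- The set of integers whose residue mod `n` lies in `J`. -/
def Iset (n : ℕ) (fbar : ZMod n → ZMod n) : Set ℤ :=
  {i | (i : ZMod n) ∈ Jset n fbar}

theorem Antitone.apply_eq_of_forall_exists_ge {α β : Type*} [Preorder α] [PartialOrder β]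
    {h : α → β} (hh : Antitone h) (hrec : ∀ a b, ∃ c, b ≤ c ∧ h c = h a) (a b : α) :
    h a = h b := by
  have hle : ∀ a b, h a ≤ h b := fun a b => by
    obtain ⟨c, hbc, hc⟩ := hrec a b
    exact hc ▸ hh hbc
  exact le_antisymm (hle a b) (hle b a)

theorem StrictMono.Icc_inter_range {α β : Type*} [LinearOrder α] [Preorder β] {ι : α → β}
    (hι : StrictMono ι) (a b : α) : Icc (ι a) (ι b) ∩ range ι = ι '' Icc a b := by
  ext x
  constructor
  · rintro ⟨⟨hax, hxb⟩, k, rfl⟩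
    exact ⟨k, ⟨hι.le_iff_le.mp hax, hι.le_iff_le.mp hxb⟩, rfl⟩
  · rintro ⟨k, ⟨hak, hkb⟩, rfl⟩
    exact ⟨⟨hι.monotone hak, hι.monotone hkb⟩, k, rfl⟩

theorem antitone_ncard_Icc_inter_range {ι F : ℤ → ℤ} (hι : StrictMono ι)
    (hF : StrictMonoOn F (range ι)) (hFmaps : MapsTo F (range ι) (range ι)) :
    Antitone fun k => (Icc (F (ι k)) (ι k) ∩ range ι).ncard := by
  choose g hg using fun k => hFmaps (mem_range_self k)
  have hg_strictMono : StrictMono g := fun a b hab =>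
    hι.lt_iff_lt.mp (by rw [hg, hg]; exact hF (mem_range_self a) (mem_range_self b) (hι hab))
  have hcard : ∀ k, (Icc (F (ι k)) (ι k) ∩ range ι).ncard = (k + 1 - g k).toNat := fun k => by
    rw [← hg, hι.Icc_inter_range, ncard_image_of_injective _ hι.injective, ← Finset.coe_Icc,
      ncard_coe_finset, Int.card_Icc]
  have hanti : Antitone fun k => k + 1 - g k :=
    antitone_int_of_succ_le fun k => by have := hg_strictMono (lt_add_one k); omega
  intro a b hab
  simp only [hcard]
  exact Int.toNat_le_toNat (hanti hab)

section Kupisch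

variable {ℓ f : ℤ → ℤ} {c : ℤ}

theorem monotone_of_le_sub_one_add_one (hf : ∀ i, f i = i - ℓ i - c + 1)
    (hℓ : ∀ i, ℓ i ≤ ℓ (i - 1) + 1) : Monotone f :=
  monotone_int_of_le_succ fun i => by
    have := hℓ (i + 1)
    rw [add_sub_cancel_right] at this
    rw [hf, hf]
    linarith

theorem add_int_mul_of_periodic {n : ℕ} (hf : ∀ i, f i = i - ℓ i - c + 1)
    (hℓ : Periodic ℓ n) (i t : ℤ) : f (i + t * n) = f i + t * n := by
  rw [hf, hf, show ℓ (i + t * n) = ℓ i by simpa using hℓ.int_mul t i]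
  ring

end Kupisch

section PeriodicResidues

variable {n : ℕ} {f : ℤ → ℤ} {fbar : ZMod n → ZMod n}

theorem Jset_eq_periodicPts : Jset n fbar = periodicPts fbar := rfl

theorem mem_Iset_add_int_mul_iff (i t : ℤ) : i + t * n ∈ Iset n fbar ↔ i ∈ Iset n fbar := by
  simp [Iset]

theorem mapsTo_Iset (hfbar : ∀ i : ℤ, fbar i = f i) : MapsTo f (Iset n fbar) (Iset n fbar) :=
  fun i hi => by
    simpa [Iset, Jset_eq_periodicPts, hfbar] using (bijOn_periodicPts fbar).mapsTo hi

theorem injOn_Iset (hn : 0 < n) (hfbar : ∀ i : ℤ, fbar i = f i)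
    (hfper : ∀ i t : ℤ, f (i + t * n) = f i + t * n) : InjOn f (Iset n fbar) := by
  intro i hi i' hi' he
  have hcast : (i : ZMod n) = i' :=
    (bijOn_periodicPts fbar).injOn hi hi' (by rw [hfbar, hfbar, he])
  obtain ⟨t, ht⟩ := (ZMod.intCast_eq_intCast_iff_dvd_sub i i' n).mp hcast
  obtain rfl : i' = i + t * n := by linarith
  rw [hfper] at he
  have ht0 : t = 0 := by simpa [hn.ne'] using he
  simp [ht0]

theorem ncard_Icc_inter_Iset_add_int_mul (hfper : ∀ i t : ℤ, f (i + t * n) = f i + t * n)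
    (x t : ℤ) :
    (Icc (f (x + t * n)) (x + t * n) ∩ Iset n fbar).ncard = (Icc (f x) x ∩ Iset n fbar).ncard := by
  rw [hfper, ← ncard_image_of_injective (Icc (f x) x ∩ Iset n fbar) (add_left_injective (t * n)),
    image_add_right]
  congr 1
  ext y
  rw [mem_preimage, mem_inter_iff, mem_inter_iff, ← mem_Iset_add_int_mul_iff (y + -(t * n)) t,
    neg_add_cancel_right, mem_Icc, mem_Icc]
  constructor <;> rintro ⟨⟨h₁, h₂⟩, h₃⟩ <;> exact ⟨⟨by linarith, by linarith⟩, h₃⟩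

end PeriodicResidues

theorem ellprime_constant_general (n d : ℕ) (hn : 0 < n) (ℓ : ℤ → ℤ)
    (hK2 : ∀ i : ℤ, ℓ i ≤ ℓ (i - 1) + 1)
    (hKper : ∀ i : ℤ, ℓ (i + n) = ℓ i)
    (f : ℤ → ℤ) (hf : ∀ i : ℤ, f i = i - ℓ i - d + 1)
    (fbar : ZMod n → ZMod n)
    (hfbar : ∀ i : ℤ, fbar (i : ZMod n) = ((f i : ℤ) : ZMod n))
    (ι : ℤ → ℤ) (hι : StrictMono ι) (hrange : Set.range ι = Iset n fbar)
    (ℓ' : ℤ → ℤ)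
    (hℓ' : ∀ k : ℤ,
      ℓ' k = ((Set.Icc (f (ι k)) (ι k) ∩ Iset n fbar).ncard : ℤ) - d) :
    ∃ c : ℤ, ∀ k : ℤ, ℓ' k = c := by
  have hfper := add_int_mul_of_periodic hf hKper
  have hf_strictMonoOn : StrictMonoOn f (Iset n fbar) :=
    ((monotone_of_le_sub_one_add_one hf hK2).monotoneOn _).strictMonoOn_of_injOn
      (injOn_Iset hn hfbar hfper)
  have hanti := antitone_ncard_Icc_inter_range hι (hrange ▸ hf_strictMonoOn)
    (hrange ▸ mapsTo_Iset hfbar)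
  rw [hrange] at hanti
  have hrec : ∀ a b, ∃ c, b ≤ c ∧
      (Icc (f (ι c)) (ι c) ∩ Iset n fbar).ncard = (Icc (f (ι a)) (ι a) ∩ Iset n fbar).ncard := by
    intro a b
    obtain ⟨c, hc⟩ : ι a + (ι b - ι a).toNat * n ∈ range ι :=
      hrange ▸ (mem_Iset_add_int_mul_iff _ _).mpr (hrange ▸ mem_range_self a)
    refine ⟨c, hι.le_iff_le.mp ?_, by rw [hc, ncard_Icc_inter_Iset_add_int_mul hfper]⟩
    have hn₁ : (1 : ℤ) ≤ n := by exact_mod_cast hn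
    rw [hc]
    nlinarith [Int.self_le_toNat (ι b - ι a)]
  exact ⟨_, fun k => by rw [hℓ', hanti.apply_eq_of_forall_exists_ge hrec k 0]⟩

/-- the function `ℓ' k = |[f(ι k), ι k] ∩ I| - d` is constant. -/
theorem ellprime_constant (n d : ℕ) (hn : 0 < n) (hd : 0 < d) (ℓ : ℤ → ℤ)
    (hK1 : ∀ i : ℤ, 1 ≤ ℓ i) (hK2 : ∀ i : ℤ, ℓ i ≤ ℓ (i - 1) + 1)
    (hKper : ∀ i : ℤ, ℓ (i + n) = ℓ i)
    (f : ℤ → ℤ) (hf : ∀ i : ℤ, f i = i - ℓ i - d + 1)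
    (fbar : ZMod n → ZMod n)
    (hfbar : ∀ i : ℤ, fbar (i : ZMod n) = ((f i : ℤ) : ZMod n))
    (ι : ℤ → ℤ) (hι : StrictMono ι) (hrange : Set.range ι = Iset n fbar)
    (ℓ' : ℤ → ℤ)
    (hℓ' : ∀ k : ℤ,
      ℓ' k = ((Set.Icc (f (ι k)) (ι k) ∩ Iset n fbar).ncard : ℤ) - d) :
    ∃ c : ℤ, ∀ k : ℤ, ℓ' k = c :=
  ellprime_constant_general n d hn ℓ hK2 hKper f hf fbar hfbar ι hι hrange ℓ' hℓ'
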